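/- arXiv:1606.00038 — 2 statements merged into one kernel-verified Lean document; each statement's English description precedes it below -/
import Mathlib

section
/- Let G be a finite group, K a normal subgroup of G, r a prime dividing |K| such that r² does not divide |G|, and p a prime dividing |G| such that p does not divide |K| and p does not divide r − 1. Then G has an element of order p·r. -/
/-!
By Frattini's argument `G = N_G(R) K` for a Sylow `r`-subgroup `R` of `K`, which has order `r`
since `r² ∤ |G|`. Hence `|G : K|`, and with it `p`, divides `|N_G(R)|`, so the normalizer contains
an element `g` of order `p`. Conjugation by `g` is an automorphism of `R ≅ ℤ/r` of order dividing
both `p` and `|Aut R| = r - 1`, hence trivial; so `g` commutes with a generator `x` of `R` and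
`g x` has order `p r`.
-/

open Subgroup

theorem Sylow.card_eq_self_of_not_sq_dvd {G : Type*} [Group G] [Finite G] {r : ℕ} [Fact r.Prime]
    (P : Sylow r G) (hr : r ∣ Nat.card G) (hr2 : ¬ r ^ 2 ∣ Nat.card G) : Nat.card P = r := by
  have hG : Nat.card G ≠ 0 := Nat.card_pos.ne'
  have hprime : r.Prime := Fact.out
  have hle : 1 ≤ (Nat.card G).factorization r := by
    rwa [← hprime.pow_dvd_iff_le_factorization hG, pow_one]
  have hlt : (Nat.card G).factorization r < 2 := by
    rwa [← not_le, ← hprime.pow_dvd_iff_le_factorization hG]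
  rw [P.card_eq_multiplicity, show (Nat.card G).factorization r = 1 by omega, pow_one]

theorem Subgroup.index_dvd_card_of_sup_eq_top {G : Type*} [Group G] {H K : Subgroup G}
    [K.Normal] (h : H ⊔ K = ⊤) : K.index ∣ Nat.card H := by
  rw [← relIndex_top_right, ← h, relIndex_sup_right]
  exact relIndex_dvd_card K H

theorem Subgroup.mem_centralizer_of_coprime_card_mulAut {G : Type*} [Group G] {H : Subgroup G}
    {g : G} (hg : g ∈ normalizer (H : Set G)) (hcop : (orderOf g).Coprime (Nat.card (MulAut H))) :
    g ∈ centralizer (H : Set G) := by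
  have hker : H.normalizerMonoidHom ⟨g, hg⟩ = 1 := by
    refine orderOf_eq_one_iff.mp <|
      Nat.eq_one_of_dvd_coprimes hcop ?_ (_root_.orderOf_dvd_natCard _)
    rw [← orderOf_mk g hg]
    exact orderOf_map_dvd _ _
  rwa [← MonoidHom.mem_ker, normalizerMonoidHom_ker] at hker

theorem Subgroup.mem_centralizer_of_card_eq_prime {G : Type*} [Group G] {H : Subgroup G}
    {r : ℕ} (hr : r.Prime) (hH : Nat.card H = r) {g : G} (hg : g ∈ normalizer (H : Set G))
    (hcop : (orderOf g).Coprime (r - 1)) : g ∈ centralizer (H : Set G) := by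
  have : Finite H := Nat.finite_of_card_ne_zero (hH ▸ hr.ne_zero)
  have : IsCyclic H := isCyclic_of_prime_card (hp := ⟨hr⟩) hH
  refine mem_centralizer_of_coprime_card_mulAut hg ?_
  rwa [IsCyclic.card_mulAut, hH, Nat.totient_prime hr]

theorem exists_elem_order_mul_of_frattini {G : Type*} [Group G] [Finite G]
    (K : Subgroup G) (hK : K.Normal) {r p : ℕ} (hr : r.Prime) (hp : p.Prime)
    (hrK : r ∣ Nat.card K) (hr2 : ¬ r ^ 2 ∣ Nat.card G)
    (hpG : p ∣ Nat.card G) (hpK : ¬ p ∣ Nat.card K) (hpr : ¬ p ∣ r - 1) :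
    ∃ g : G, orderOf g = p * r := by
  have := Fact.mk hr
  have := Fact.mk hp
  obtain ⟨P⟩ : Nonempty (Sylow r K) := inferInstance
  set R := (P : Subgroup K).map K.subtype
  have hR : Nat.card R = r := by
    rw [card_map_of_injective K.subtype_injective]
    exact P.card_eq_self_of_not_sq_dvd hrK fun h ↦ hr2 (h.trans K.card_subgroup_dvd_card)
  have hpN : p ∣ Nat.card (normalizer (R : Set G)) := by
    refine Dvd.dvd.trans ?_ (index_dvd_card_of_sup_eq_top (Sylow.normalizer_sup_eq_top P))
    rw [← K.card_mul_index] at hpG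
    exact (hp.dvd_mul.mp hpG).resolve_left hpK
  obtain ⟨g, hg⟩ := exists_prime_orderOf_dvd_card' p hpN
  obtain ⟨x, hx⟩ := exists_prime_orderOf_dvd_card' r (hR ▸ dvd_rfl : r ∣ Nat.card R)
  have hog : orderOf (g : G) = p := by rw [orderOf_coe, hg]
  have hox : orderOf (x : G) = r := by rw [orderOf_coe, hx]
  have hgR : (g : G) ∈ centralizer (R : Set G) :=
    mem_centralizer_of_card_eq_prime hr hR g.2 (hog ▸ (hp.coprime_iff_not_dvd.mpr hpr))
  have hcomm : Commute (g : G) x := (mem_centralizer_iff.mp hgR x x.2).symm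
  have hpr' : p.Coprime r := (Nat.coprime_primes hp hr).mpr fun h ↦ hpK (h ▸ hrK)
  refine ⟨g * x, ?_⟩
  rw [hcomm.orderOf_mul_eq_mul_orderOf_of_coprime (hog ▸ hox ▸ hpr'), hog, hox]
end

section
/- Let G be a finite group with |G| = 2⁴·3·5²·7·11³·19 and degree pattern D(G) = (3,2,3,1,2,1), i.e., deg_G(2)=3, deg_G(3)=2, deg_G(5)=3, deg_G(7)=1, deg_G(11)=2, deg_G(19)=1. Then every solvable normal subgroup K of G satisfies π(K) ⊆ {2,3,5,11}; in particular, neither 7 nor 19 divides |K|. -/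
open scoped MatrixGroups

/-- Two distinct primes `p` and `q` dividing `|G|` are adjacent in the prime graph `Γ(G)`
of a finite group `G` iff `G` has an element of order `p * q`. -/
def primeGraphAdj (G : Type*) [Group G] (p q : ℕ) : Prop :=
  p ≠ q ∧ p.Prime ∧ q.Prime ∧ p ∣ Nat.card G ∧ q ∣ Nat.card G ∧ ∃ g : G, orderOf g = p * q

open scoped Classical in
/-- The degree of a vertex `p` in the prime graph of `G`: the number of primes dividing `|G|`
that are adjacent to `p`. -/
noncomputable def primeGraphDeg (G : Type*) [Group G] (p : ℕ) : ℕ :=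
  ((Nat.card G).primeFactors.filter (fun r => primeGraphAdj G p r)).card

/-!
Were `7` or `19` to divide `|K|`, it would be adjacent in the prime graph to both other primes
among `5, 7, 19`, against its degree `1`. These edges come from a general fact: if `K ⊴ G` is
solvable, `p ∣ |K|`, `q ∣ |G|`, and no `p`-power divisor `> 1` of `|G|` is `≡ 1 (mod q)` and
vice versa, then `G` has an element of order `pq`. Adjoin an element `y` of order `q` to `K`;
the group `K⟨y⟩` is solvable, so it has a nontrivial normal `r`-subgroup `M`. If `r = p`, then
`y` acts on `M` by conjugation and `|M| ≢ 1 (mod q)`, so `y` centralizes some `m ≠ 1` in `M`,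
and a power of `m` times `y` has order `pq` (symmetrically if `r = q`). Otherwise induct on
`K⟨y⟩ ⧸ M`, whose order is still divisible by `p` and `q`.
-/

open Subgroup

section OrderOf

variable {G : Type*} [Group G] [Finite G]

theorem exists_orderOf_eq_of_dvd_orderOf {x : G} {n : ℕ} (h : n ∣ orderOf x) :
    ∃ g : G, orderOf g = n :=
  ⟨x ^ (orderOf x / n), orderOf_pow_orderOf_div (orderOf_pos x).ne' h⟩

theorem exists_orderOf_eq_of_surjective {H : Type*} [Group H] {f : G →* H}
    (hf : Function.Surjective f) (h : H) : ∃ g : G, orderOf g = orderOf h := by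
  obtain ⟨x, rfl⟩ := hf h
  exact exists_orderOf_eq_of_dvd_orderOf (orderOf_map_dvd f x)

theorem Commute.exists_orderOf_eq_mul {p q : ℕ} (hp : p.Prime) (hq : q.Prime) (hpq : p ≠ q)
    {x y : G} (hxy : Commute x y) (hx : p ∣ orderOf x) (hy : orderOf y = q) :
    ∃ g : G, orderOf g = p * q := by
  have hx' : orderOf (x ^ (orderOf x / p)) = p := orderOf_pow_orderOf_div (orderOf_pos x).ne' hx
  refine ⟨x ^ (orderOf x / p) * y, ?_⟩
  rw [(hxy.pow_left _).orderOf_mul_eq_mul_orderOf_of_coprime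
    (by rw [hx', hy]; exact (Nat.coprime_primes hp hq).mpr hpq), hx', hy]

end OrderOf

theorem IsPGroup.exists_ne_one_mem_fixedPoints {q : ℕ} [Fact q.Prime] {Q M : Type*}
    [Group Q] [Group M] [Finite M] [MulDistribMulAction Q M] (hQ : IsPGroup q Q)
    (hM : ¬ Nat.card M ≡ 1 [MOD q]) : ∃ m : M, m ≠ 1 ∧ m ∈ MulAction.fixedPoints Q M := by
  by_contra! h
  have hfix : MulAction.fixedPoints Q M = {1} :=
    Set.eq_singleton_iff_unique_mem.mpr ⟨smul_one, fun m hm => by_contra fun hm1 => h m hm1 hm⟩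
  have hcard := hQ.card_modEq_card_fixedPoints M
  rw [hfix, Nat.card_coe_set_eq, Set.ncard_singleton] at hcard
  exact hM hcard

section PGroup

variable {G : Type*} [Group G] [Finite G]

theorem exists_ne_one_commute_of_mem_normalizer {q : ℕ} (hq : q.Prime) {M : Subgroup G} {y : G}
    (hy : y ∈ normalizer (M : Set G)) (hyq : orderOf y = q) (hM : ¬ Nat.card M ≡ 1 [MOD q]) :
    ∃ m ∈ M, m ≠ 1 ∧ Commute y m := by
  have := Fact.mk hq
  let y' : normalizer (M : Set G) := ⟨y, hy⟩
  have hQ : IsPGroup q (zpowers y') :=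
    IsPGroup.of_card (n := 1) (by rw [Nat.card_zpowers, orderOf_mk, hyq, pow_one])
  obtain ⟨m, hm1, hfix⟩ := hQ.exists_ne_one_mem_fixedPoints hM
  have hconj : y * m * y⁻¹ = m := congrArg Subtype.val (hfix ⟨y', mem_zpowers y'⟩)
  exact ⟨m, m.2, by simpa using hm1, mul_inv_eq_iff_eq_mul.mp hconj⟩

theorem IsPGroup.exists_orderOf_eq_mul_of_normal {p q : ℕ} (hp : p.Prime) (hq : q.Prime)
    (hpq : p ≠ q) {M : Subgroup G} [M.Normal] (hMp : IsPGroup p M) (hM : M ≠ ⊥)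
    (hqG : q ∣ Nat.card G) (hpow : ∀ j, p ^ j ∣ Nat.card G → p ^ j ≡ 1 [MOD q] → j = 0) :
    ∃ g : G, orderOf g = p * q := by
  have := Fact.mk hp
  have := Fact.mk hq
  obtain ⟨k, hk⟩ := IsPGroup.iff_card.mp hMp
  have hMq : ¬ Nat.card M ≡ 1 [MOD q] := fun h => hM <| M.eq_bot_of_card_eq <| by
    rw [hk, hpow k (hk ▸ M.card_subgroup_dvd_card) (hk ▸ h), pow_zero]
  obtain ⟨y, hy⟩ := exists_prime_orderOf_dvd_card' q hqG
  obtain ⟨m, hmM, hm1, hym⟩ :=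
    exists_ne_one_commute_of_mem_normalizer hq (normalizer_eq_top (H := M) ▸ mem_top y) hy hMq
  have hpm : p ∣ orderOf m := by
    simpa using hMp.dvd_orderOf (g := ⟨m, hmM⟩) (by simpa using hm1)
  exact hym.symm.exists_orderOf_eq_mul hp hq hpq hpm hy

end PGroup

section Solvable

variable {G : Type*} [Group G]

theorem exists_characteristic_ne_bot_commutator_eq_bot [Group.IsSolvable G] [Nontrivial G] :
    ∃ A : Subgroup G, A.Characteristic ∧ A ≠ ⊥ ∧ ⁅A, A⁆ = ⊥ := by
  classical
  obtain ⟨n, hn⟩ := Group.IsSolvable.solvable (G := G)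
  have hex : ∃ n, derivedSeries G (n + 1) = ⊥ :=
    ⟨n, le_bot_iff.mp (hn ▸ derivedSeries_antitone G n.le_succ)⟩
  refine ⟨derivedSeries G (Nat.find hex), inferInstance, ?_,
    (derivedSeries_succ G _).symm.trans (Nat.find_spec hex)⟩
  cases h : Nat.find hex with
  | zero => simp
  | succ k => exact Nat.find_min hex (by omega)

theorem exists_normal_isPGroup_ne_bot [Finite G] [Group.IsSolvable G] [Nontrivial G] :
    ∃ r, r.Prime ∧ ∃ M : Subgroup G, M.Normal ∧ IsPGroup r M ∧ M ≠ ⊥ := by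
  obtain ⟨A, hA, hA1, hAA⟩ := exists_characteristic_ne_bot_commutator_eq_bot (G := G)
  obtain ⟨r, hr, hrA⟩ := Nat.exists_prime_and_dvd (A.eq_bot_iff_card.not.mp hA1)
  have := Fact.mk hr
  obtain ⟨P⟩ : Nonempty (Sylow r A) := inferInstance
  have hcomm : ∀ a b : A, a * b = b * a := fun a b =>
    Subtype.ext (commutator_eq_bot_iff_le_centralizer.mp hAA b.2 a a.2)
  have hPn : (P : Subgroup A).Normal := ⟨fun n hn g => by rwa [hcomm g n, mul_inv_cancel_right]⟩
  have := P.characteristic_of_normal hPn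
  refine ⟨r, hr, (P : Subgroup A).map A.subtype, inferInstance, P.isPGroup'.map _, ?_⟩
  rw [Ne, map_eq_bot_iff_of_injective _ A.subtype_injective]
  exact P.ne_bot_of_dvd_card hrA

theorem IsPGroup.dvd_card_quotient [Finite G] {r s : ℕ} (hr : r.Prime) (hs : s.Prime)
    (hsr : s ≠ r) {M : Subgroup G} [M.Normal] (hM : IsPGroup r M) (hsG : s ∣ Nat.card G) :
    s ∣ Nat.card (G ⧸ M) := by
  have := Fact.mk hr
  obtain ⟨k, hk⟩ := IsPGroup.iff_card.mp hM
  have hcop : s.Coprime (Nat.card M) := hk ▸ ((Nat.coprime_primes hs hr).mpr hsr).pow_right k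
  rw [M.card_eq_card_quotient_mul_card_subgroup] at hsG
  exact hcop.dvd_of_dvd_mul_right hsG

theorem Group.IsSolvable.exists_orderOf_eq_mul {p q : ℕ} (hp : p.Prime) (hq : q.Prime)
    (hpq : p ≠ q) (K : Type*) [Group K] [Finite K] [Group.IsSolvable K]
    (hpK : p ∣ Nat.card K) (hqK : q ∣ Nat.card K)
    (hpowp : ∀ j, p ^ j ∣ Nat.card K → p ^ j ≡ 1 [MOD q] → j = 0)
    (hpowq : ∀ j, q ^ j ∣ Nat.card K → q ^ j ≡ 1 [MOD p] → j = 0) :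
    ∃ x : K, orderOf x = p * q := by
  induction hn : Nat.card K using Nat.strong_induction_on generalizing K with
  | _ n ih =>
  have : Nontrivial K :=
    Finite.one_lt_card_iff_nontrivial.mp (hp.one_lt.trans_le (Nat.le_of_dvd Nat.card_pos hpK))
  obtain ⟨r, hr, M, hMn, hMr, hM⟩ := exists_normal_isPGroup_ne_bot (G := K)
  by_cases hrp : r = p
  · subst hrp
    exact hMr.exists_orderOf_eq_mul_of_normal hp hq hpq hM hqK hpowp
  by_cases hrq : r = q
  · subst hrq
    rw [mul_comm]
    exact hMr.exists_orderOf_eq_mul_of_normal hq hp hpq.symm hM hpK hpowq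
  have hlt : Nat.card (K ⧸ M) < n := by
    rw [← hn, M.card_eq_card_quotient_mul_card_subgroup]
    exact lt_mul_of_one_lt_right Nat.card_pos (M.one_lt_card_iff_ne_bot.mpr hM)
  have hdvd := M.card_quotient_dvd_card
  obtain ⟨x, hx⟩ := ih _ hlt (K ⧸ M) (hMr.dvd_card_quotient hr hp (Ne.symm hrp) hpK)
    (hMr.dvd_card_quotient hr hq (Ne.symm hrq) hqK) (fun j hj => hpowp j (hj.trans hdvd))
    (fun j hj => hpowq j (hj.trans hdvd)) rfl
  rw [← hx]
  exact exists_orderOf_eq_of_surjective (QuotientGroup.mk'_surjective M) x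

theorem isSolvable_sup_of_normal {N H : Subgroup G} [N.Normal] [Group.IsSolvable N]
    [Group.IsSolvable H] : Group.IsSolvable ↥(N ⊔ H) := by
  -- `N ⊔ H` is an extension of `N` by the image of `H` in `G ⧸ N`.
  have hle : N ⊔ H ≤ (H.map (QuotientGroup.mk' N)).comap (QuotientGroup.mk' N) :=
    sup_le (fun n hn => by
      rw [mem_comap, QuotientGroup.mk'_apply, (QuotientGroup.eq_one_iff n).mpr hn]
      exact one_mem _) (le_comap_map _ _)
  have : Group.IsSolvable (H.map (QuotientGroup.mk' N)) :=
    Group.isSolvable_of_surjective ((QuotientGroup.mk' N).subgroupMap_surjective H)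
  refine Group.isSolvable_of_ker_le_range (inclusion le_sup_left)
    (((QuotientGroup.mk' N).comp (N ⊔ H).subtype).codRestrict (H.map (QuotientGroup.mk' N))
      fun x => hle x.2) ?_
  intro x hx
  have hxN : (x : G) ∈ N := by
    rw [MonoidHom.mem_ker] at hx
    exact (QuotientGroup.eq_one_iff _).mp (congrArg Subtype.val hx)
  exact ⟨⟨x, hxN⟩, rfl⟩

theorem exists_orderOf_eq_mul_of_normal_isSolvable [Finite G] {K : Subgroup G} [K.Normal]
    [Group.IsSolvable K] {p q : ℕ} (hp : p.Prime) (hq : q.Prime) (hpq : p ≠ q)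
    (hpK : p ∣ Nat.card K) (hqG : q ∣ Nat.card G)
    (hpowp : ∀ j, p ^ j ∣ Nat.card G → p ^ j ≡ 1 [MOD q] → j = 0)
    (hpowq : ∀ j, q ^ j ∣ Nat.card G → q ^ j ≡ 1 [MOD p] → j = 0) :
    ∃ g : G, orderOf g = p * q := by
  have := Fact.mk hq
  obtain ⟨y, hy⟩ := exists_prime_orderOf_dvd_card' (G := G) q hqG
  have := isSolvable_sup_of_normal (N := K) (H := zpowers y)
  have hHG := (K ⊔ zpowers y).card_subgroup_dvd_card
  have hqH : q ∣ Nat.card ↥(K ⊔ zpowers y) := by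
    rw [← hy, ← Nat.card_zpowers]
    exact card_dvd_of_le le_sup_right
  obtain ⟨x, hx⟩ := Group.IsSolvable.exists_orderOf_eq_mul hp hq hpq _
    (hpK.trans (card_dvd_of_le le_sup_left)) hqH
    (fun j hj => hpowp j (hj.trans hHG)) (fun j hj => hpowq j (hj.trans hHG))
  exact ⟨x, by rwa [orderOf_coe]⟩

end Solvable

section PrimeGraph

variable {G : Type*} [Group G]

theorem primeGraphAdj_of_orderOf_eq {p q : ℕ} (hp : p.Prime) (hq : q.Prime) (hpq : p ≠ q)
    {g : G} (hg : orderOf g = p * q) : primeGraphAdj G p q := by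
  have hdvd : p * q ∣ Nat.card G := hg ▸ orderOf_dvd_natCard g
  exact ⟨hpq, hp, hq, (dvd_mul_right p q).trans hdvd, (dvd_mul_left q p).trans hdvd, g, hg⟩

theorem primeGraphAdj_of_dvd_card_normal_isSolvable [Finite G] {K : Subgroup G} [K.Normal]
    [Group.IsSolvable K] {p q : ℕ} (hp : p.Prime) (hq : q.Prime) (hpq : p ≠ q)
    (hpK : p ∣ Nat.card K) (hqG : q ∣ Nat.card G)
    (hpowp : ∀ j, p ^ j ∣ Nat.card G → p ^ j ≡ 1 [MOD q] → j = 0)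
    (hpowq : ∀ j, q ^ j ∣ Nat.card G → q ^ j ≡ 1 [MOD p] → j = 0) : primeGraphAdj G p q :=
  have ⟨_, hg⟩ := exists_orderOf_eq_mul_of_normal_isSolvable hp hq hpq hpK hqG hpowp hpowq
  primeGraphAdj_of_orderOf_eq hp hq hpq hg

theorem two_le_primeGraphDeg [Finite G] {p q r : ℕ} (hq : primeGraphAdj G p q)
    (hr : primeGraphAdj G p r) (hqr : q ≠ r) : 2 ≤ primeGraphDeg G p := by
  classical
  have hmem {s : ℕ} (hs : primeGraphAdj G p s) : s ∈ (Nat.card G).primeFactors :=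
    Nat.mem_primeFactors.mpr ⟨hs.2.2.1, hs.2.2.2.2.1, Nat.card_pos.ne'⟩
  exact Finset.one_lt_card.mpr ⟨q, Finset.mem_filter.mpr ⟨hmem hq, hq⟩,
    r, Finset.mem_filter.mpr ⟨hmem hr, hr⟩, hqr⟩

end PrimeGraph

theorem forall_pow_dvd_of_forall_le {p n : ℕ} (e : ℕ) {P : ℕ → Prop}
    (hn : ¬ p ^ (e + 1) ∣ n) (h : ∀ j ≤ e, p ^ j ∣ n → P j) (j : ℕ) (hj : p ^ j ∣ n) : P j :=
  h j (not_lt.mp fun hlt => hn ((pow_dvd_pow p hlt).trans hj)) hj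

theorem solvable_normal_pi_subset_L3_11_general (G : Type*) [Group G] [Finite G]
    (hcard : Nat.card G = 2 ^ 4 * 3 * 5 ^ 2 * 7 * 11 ^ 3 * 19)
    (hdeg7 : primeGraphDeg G 7 = 1) (hdeg19 : primeGraphDeg G 19 = 1) :
    ∀ K : Subgroup G, K.Normal → IsSolvable K →
      (Nat.card K).primeFactors ⊆ {2, 3, 5, 11} ∧
        ¬ 7 ∣ Nat.card K ∧ ¬ 19 ∣ Nat.card K := by
  intro K _ hK
  have : Group.IsSolvable K := hK
  have adj {p q : ℕ} (hp : p = 7 ∨ p = 19) (hq : q = 5 ∨ q = 7 ∨ q = 19) (hpq : p ≠ q)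
      (hpK : p ∣ Nat.card K) : primeGraphAdj G p q := by
    rcases hp with rfl | rfl <;> rcases hq with rfl | rfl | rfl <;>
      first
      | exact absurd rfl hpq
      | refine primeGraphAdj_of_dvd_card_normal_isSolvable (by norm_num) (by norm_num) hpq hpK
          (by rw [hcard]; norm_num) ?_ ?_ <;>
        exact forall_pow_dvd_of_forall_le 3 (by rw [hcard]; norm_num) (by rw [hcard]; decide)
  have h7 : ¬ 7 ∣ Nat.card K := fun h => by
    have := two_le_primeGraphDeg (adj (q := 5) (by simp) (by simp) (by simp) h)
      (adj (q := 19) (by simp) (by simp) (by simp) h) (by simp)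
    omega
  have h19 : ¬ 19 ∣ Nat.card K := fun h => by
    have := two_le_primeGraphDeg (adj (q := 5) (by simp) (by simp) (by simp) h)
      (adj (q := 7) (by simp) (by simp) (by simp) h) (by simp)
    omega
  refine ⟨fun s hs => ?_, h7, h19⟩
  have hsK := Nat.dvd_of_mem_primeFactors hs
  have hsG := Nat.primeFactors_mono K.card_subgroup_dvd_card Nat.card_pos.ne' hs
  simp only [hcard, ← Nat.toFinset_factors, Nat.reducePow, Nat.reduceMul,
    Nat.primeFactorsList_ofNat, List.mem_toFinset, List.mem_cons, List.not_mem_nil,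
    or_false] at hsG
  have : s ≠ 7 ∧ s ≠ 19 := ⟨by rintro rfl; exact h7 hsK, by rintro rfl; exact h19 hsK⟩
  simp only [Finset.mem_insert, Finset.mem_singleton]
  omega

theorem solvable_normal_pi_subset_L3_11 (G : Type*) [Group G] [Finite G]
    (hcard : Nat.card G = 2 ^ 4 * 3 * 5 ^ 2 * 7 * 11 ^ 3 * 19)
    (hdeg2 : primeGraphDeg G 2 = 3) (hdeg3 : primeGraphDeg G 3 = 2)
    (hdeg5 : primeGraphDeg G 5 = 3) (hdeg7 : primeGraphDeg G 7 = 1)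
    (hdeg11 : primeGraphDeg G 11 = 2) (hdeg19 : primeGraphDeg G 19 = 1) :
    ∀ K : Subgroup G, K.Normal → IsSolvable K →
      (Nat.card K).primeFactors ⊆ {2, 3, 5, 11} ∧
        ¬ 7 ∣ Nat.card K ∧ ¬ 19 ∣ Nat.card K :=
  solvable_normal_pi_subset_L3_11_general G hcard hdeg7 hdeg19
end
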